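/- Let R be a commutative ring, M a finitely generated projective R-module, x ∈ R a non-zero-divisor, G a subgroup scheme of GL_M, and suppose there exists an isomorphism i: (M ⊗ R[1/x], (t_α)) ≅ (M₁ ⊗ R[1/x], (v_α)) of modules with tensors over R[1/x]. Then there exists an isomorphism (M, (t_α)) ≅ (M₁, (v_α)) over R if and only if there exists an element h ∈ G(R[1/x]) that maps the R-submodule i^{-1}(M₁) of M ⊗ R[1/x] onto M. -/

import Mathlib

open scoped TensorProduct

/-- The graded piece `N^{⊗ s} ⊗ N^{* ⊗ t}` of the essential tensor algebra of a module. -/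
abbrev TensorPiece (A : Type*) [CommRing A] (N : Type*) [AddCommGroup N] [Module A N]
    (st : ℕ × ℕ) : Type _ :=
  (⨂[A] (_ : Fin st.1), N) ⊗[A] (⨂[A] (_ : Fin st.2), Module.Dual A N)

/-- The equivalence induced on a graded piece of the essential tensor algebra by a linear
isomorphism. -/
noncomputable def tensorPieceCongr {A : Type*} [CommRing A]
    {M N : Type*} [AddCommGroup M] [Module A M] [AddCommGroup N] [Module A N]
    (e : M ≃ₗ[A] N) (st : ℕ × ℕ) :
    TensorPiece A M st ≃ₗ[A] TensorPiece A N st :=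
  TensorProduct.congr (PiTensorProduct.congr fun _ => e)
    (PiTensorProduct.congr fun _ => e.symm.dualMap)

/-! The isomorphisms `ρ_A : M[1/x] ≃ M₁[1/x]` carrying `(t_α)` to `(v_α)` correspond bijectively to
the elements `h` of `G(R[1/x])` via `ρ_A = i ∘ h⁻¹`, and `ρ_A` comes from an `R`-isomorphism
`M ≃ M₁` exactly when it maps `M` onto `M₁`, i.e. when `h` maps `i⁻¹(M₁)` onto `M`. Here `M` and
`M₁` are seen inside their localizations because a projective module has no `x`-torsion. -/

section TensorPiece

variable {A : Type*} [CommRing A] {M N P : Type*} [AddCommGroup M] [Module A M]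
  [AddCommGroup N] [Module A N] [AddCommGroup P] [Module A P]

lemma tensorPieceCongr_trans (e : M ≃ₗ[A] N) (f : N ≃ₗ[A] P) (st : ℕ × ℕ) :
    tensorPieceCongr (e.trans f) st = (tensorPieceCongr e st).trans (tensorPieceCongr f st) := by
  apply LinearEquiv.toLinearMap_injective
  ext mx my
  simp [tensorPieceCongr]
  rfl

lemma tensorPieceCongr_refl (st : ℕ × ℕ) :
    tensorPieceCongr (LinearEquiv.refl A M) st = LinearEquiv.refl A _ := by
  apply LinearEquiv.toLinearMap_injective
  ext mx my
  simp [tensorPieceCongr]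

lemma tensorPieceCongr_symm (e : M ≃ₗ[A] N) (st : ℕ × ℕ) :
    tensorPieceCongr e.symm st = (tensorPieceCongr e st).symm := by
  ext z
  apply (tensorPieceCongr e st).injective
  rw [LinearEquiv.apply_symm_apply, ← LinearEquiv.trans_apply, ← tensorPieceCongr_trans,
    LinearEquiv.symm_trans_self, tensorPieceCongr_refl, LinearEquiv.refl_apply]

lemma tensorPieceCongr_trans_symm_apply_eq_self_iff (i e : M ≃ₗ[A] N) (st : ℕ × ℕ)
    (t : TensorPiece A M st) :
    tensorPieceCongr (i.trans e.symm) st t = t ↔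
      tensorPieceCongr e st t = tensorPieceCongr i st t := by
  rw [tensorPieceCongr_trans, tensorPieceCongr_symm, LinearEquiv.trans_apply,
    LinearEquiv.symm_apply_eq, eq_comm]

end TensorPiece

lemma IsLocalizedModule.injective_of_le_nonZeroDivisors {R : Type*} [CommRing R]
    {S : Submonoid R} (hS : S ≤ nonZeroDivisors R)
    {M M' : Type*} [AddCommMonoid M] [Module R M] [AddCommMonoid M'] [Module R M']
    [Module.IsTorsionFree R M] (f : M →ₗ[R] M') [IsLocalizedModule S f] :
    Function.Injective f :=
  (IsLocalizedModule.injective_iff_isRegular S f).2 fun c =>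
    (isRegular_iff_mem_nonZeroDivisors.2 (hS c.2)).isSMulRegular

section Submodule

variable {R : Type*} [Semiring R] {M M₁ N N₁ : Type*} [AddCommMonoid M] [Module R M]
  [AddCommMonoid M₁] [Module R M₁] [AddCommMonoid N] [Module R N] [AddCommMonoid N₁] [Module R N₁]

lemma Submodule.map_trans_symm_map_symm_eq_iff (i e : N ≃ₗ[R] N₁) (p : Submodule R N₁)
    (q : Submodule R N) :
    (p.map (i.symm : N₁ →ₗ[R] N)).map ((i.trans e.symm : N ≃ₗ[R] N) : N →ₗ[R] N) = q ↔
      q.map (e : N →ₗ[R] N₁) = p := by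
  have : ((i.trans e.symm : N ≃ₗ[R] N) : N →ₗ[R] N) ∘ₗ (i.symm : N₁ →ₗ[R] N) = e.symm :=
    LinearMap.ext fun _ => by simp
  rw [← Submodule.map_comp, this, Submodule.map_symm_eq_iff]

lemma exists_linearEquiv_comp_eq_iff_map_range_eq {f : M →ₗ[R] N} {f₁ : M₁ →ₗ[R] N₁}
    (hf : Function.Injective f) (hf₁ : Function.Injective f₁) (e : N ≃ₗ[R] N₁) :
    (∃ ρ : M ≃ₗ[R] M₁, ∀ m, e (f m) = f₁ (ρ m)) ↔
      (LinearMap.range f).map (e : N →ₗ[R] N₁) = LinearMap.range f₁ := by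
  refine ⟨fun ⟨ρ, hρ⟩ => ?_, fun h => ?_⟩
  · rw [← LinearMap.range_comp, show (e : N →ₗ[R] N₁) ∘ₗ f = f₁ ∘ₗ ρ from LinearMap.ext hρ,
      LinearMap.range_comp_of_range_eq_top _ ρ.range]
  · refine ⟨(LinearEquiv.ofInjective f hf).trans
      ((e.ofSubmodules _ _ h).trans (LinearEquiv.ofInjective f₁ hf₁).symm), fun m => ?_⟩
    simp

end Submodule

theorem tensor_iso_iff_group_element_general
    {R : Type*} [CommRing R] (x : R) (hx : x ∈ nonZeroDivisors R)
    (A : Type*) [CommRing A] [Algebra R A]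
    (M M₁ : Type*) [AddCommGroup M] [Module R M] [AddCommGroup M₁] [Module R M₁]
    [Module.Projective R M]
    [Module.Projective R M₁]
    (MA M₁A : Type*) [AddCommGroup MA] [Module A MA] [AddCommGroup M₁A] [Module A M₁A]
    [Module R MA] [IsScalarTower R A MA] [Module R M₁A] [IsScalarTower R A M₁A]
    (ι : M →ₗ[R] MA) (ι₁ : M₁ →ₗ[R] M₁A)
    [IsLocalizedModule (Submonoid.powers x) ι] [IsLocalizedModule (Submonoid.powers x) ι₁]
    {J : Type*} (d : J → ℕ × ℕ)
    (t : (α : J) → TensorPiece A MA (d α))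
    (i : MA ≃ₗ[A] M₁A)
    (v : (α : J) → TensorPiece A M₁A (d α))
    (hv : ∀ α, tensorPieceCongr i (d α) (t α) = v α) :
    (∃ (ρ : M ≃ₗ[R] M₁) (ρA : MA ≃ₗ[A] M₁A),
        (∀ mm : M, ρA (ι mm) = ι₁ (ρ mm)) ∧
        ∀ α, tensorPieceCongr ρA (d α) (t α) = v α) ↔
    (∃ h : MA ≃ₗ[A] MA,
        (∀ α, tensorPieceCongr h (d α) (t α) = t α) ∧
        Submodule.map (h.toLinearMap.restrictScalars R)
          (Submodule.map (i.symm.toLinearMap.restrictScalars R) (LinearMap.range ι₁)) =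
          LinearMap.range ι) := by
  have hι := IsLocalizedModule.injective_of_le_nonZeroDivisors (Submonoid.powers_le.2 hx) ι
  have hι₁ := IsLocalizedModule.injective_of_le_nonZeroDivisors (Submonoid.powers_le.2 hx) ι₁
  constructor
  · rintro ⟨ρ, ρA, hρ, hρA⟩
    refine ⟨i.trans ρA.symm, fun α => ?_, ?_⟩
    · rw [tensorPieceCongr_trans_symm_apply_eq_self_iff, hρA, hv]
    · exact (Submodule.map_trans_symm_map_symm_eq_iff (i.restrictScalars R)
        (ρA.restrictScalars R) _ _).2
        ((exists_linearEquiv_comp_eq_iff_map_range_eq hι hι₁ (ρA.restrictScalars R)).1 ⟨ρ, hρ⟩)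
  · rintro ⟨h, ht, hmap⟩
    obtain ⟨ρA, rfl⟩ : ∃ ρA : MA ≃ₗ[A] M₁A, h = i.trans ρA.symm :=
      ⟨h.symm.trans i, by ext; simp⟩
    obtain ⟨ρ, hρ⟩ := (exists_linearEquiv_comp_eq_iff_map_range_eq hι hι₁
      (ρA.restrictScalars R)).2 ((Submodule.map_trans_symm_map_symm_eq_iff
        (i.restrictScalars R) (ρA.restrictScalars R) _ _).1 hmap)
    exact ⟨ρ, ρA, hρ, fun α =>
      ((tensorPieceCongr_trans_symm_apply_eq_self_iff _ _ _ _).1 (ht α)).trans (hv α)⟩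

/-- Fact 2.5.1 (b): given an isomorphism `i : (M ⊗ R[1/x], (t_α)) ≅ (M₁ ⊗ R[1/x], (v_α))`,
there exists an isomorphism `(M, (t_α)) ≅ (M₁, (v_α))` over `R` if and only if there is an
element `h` of `G(R[1/x])` (an automorphism of `M ⊗ R[1/x]` fixing all the `t_α`) mapping the
`R`-submodule `i⁻¹(M₁)` of `M ⊗ R[1/x]` onto `M`. -/
theorem tensor_iso_iff_group_element
    {R : Type*} [CommRing R] (x : R) (hx : x ∈ nonZeroDivisors R)
    (A : Type*) [CommRing A] [Algebra R A] [IsLocalization.Away x A]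
    (M M₁ : Type*) [AddCommGroup M] [Module R M] [AddCommGroup M₁] [Module R M₁]
    [Module.Finite R M] [Module.Projective R M]
    [Module.Finite R M₁] [Module.Projective R M₁]
    (MA M₁A : Type*) [AddCommGroup MA] [Module A MA] [AddCommGroup M₁A] [Module A M₁A]
    [Module R MA] [IsScalarTower R A MA] [Module R M₁A] [IsScalarTower R A M₁A]
    (ι : M →ₗ[R] MA) (ι₁ : M₁ →ₗ[R] M₁A)
    [IsLocalizedModule (Submonoid.powers x) ι] [IsLocalizedModule (Submonoid.powers x) ι₁]
    {J : Type*} (d : J → ℕ × ℕ)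
    (t : (α : J) → TensorPiece A MA (d α))
    (i : MA ≃ₗ[A] M₁A)
    (v : (α : J) → TensorPiece A M₁A (d α))
    (hv : ∀ α, tensorPieceCongr i (d α) (t α) = v α) :
    (∃ (ρ : M ≃ₗ[R] M₁) (ρA : MA ≃ₗ[A] M₁A),
        (∀ mm : M, ρA (ι mm) = ι₁ (ρ mm)) ∧
        ∀ α, tensorPieceCongr ρA (d α) (t α) = v α) ↔
    (∃ h : MA ≃ₗ[A] MA,
        (∀ α, tensorPieceCongr h (d α) (t α) = t α) ∧
        Submodule.map (h.toLinearMap.restrictScalars R)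
          (Submodule.map (i.symm.toLinearMap.restrictScalars R) (LinearMap.range ι₁)) =
          LinearMap.range ι) :=
  tensor_iso_iff_group_element_general x hx A M M₁ MA M₁A ι ι₁ d t i v hv
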